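/- Two commuting matrices in SL₂(ℂ) can be simultaneously approximated by commuting diagonalizable (semisimple) matrices via conjugation: there exists a sequence g_n ∈ SL₂(ℂ) such that g_n A g_n⁻¹ and g_n B g_n⁻¹ converge to a pair of commuting diagonalizable matrices in SL₂(ℂ). -/

import Mathlib

/-!
Commuting matrices over `ℂ` share an eigenvector `v`. Conjugating by an element `h ∈ SL₂(ℂ)`
with `h e₀ = v` makes both upper triangular. Conjugating an upper triangular matrix further by
`diag(t, t⁻¹)` fixes its diagonal and multiplies its corner entry by `t²`, so as `t → 0` both
conjugates converge to diagonal matrices, which commute.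
-/

open Matrix MatrixGroups Filter Topology

namespace Module.End

variable {K V : Type*} [Field K] [IsAlgClosed K] [AddCommGroup V] [Module K V]
  [FiniteDimensional K V] [Nontrivial V]

theorem exists_hasEigenvector_of_commute {f g : End K V} (hfg : Commute f g) :
    ∃ μ ν : K, ∃ v : V, f.HasEigenvector μ v ∧ g.HasEigenvector ν v := by
  obtain ⟨μ, hμ⟩ := f.exists_eigenvalue
  have hmaps : Set.MapsTo g (f.eigenspace μ) (f.eigenspace μ) :=
    mapsTo_genEigenspace_of_comm hfg μ 1
  have : Nontrivial (f.eigenspace μ) := Submodule.nontrivial_iff_ne_bot.mpr hμ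
  obtain ⟨ν, hν⟩ := exists_eigenvalue (g.restrict hmaps)
  obtain ⟨w, hw⟩ := hν.exists_hasEigenvector
  have hw0 : (w : V) ≠ 0 := by simpa using hw.2
  exact ⟨μ, ν, w, ⟨w.2, hw0⟩,
    ⟨mem_eigenspace_iff.mpr (congrArg Subtype.val hw.apply_eq_smul), hw0⟩⟩

end Module.End

theorem Matrix.exists_mulVec_eq_smul_of_commute {K n : Type*} [Field K] [IsAlgClosed K]
    [Fintype n] [DecidableEq n] [Nonempty n] {A B : Matrix n n K} (hAB : Commute A B) :
    ∃ μ ν : K, ∃ v : n → K, v ≠ 0 ∧ A *ᵥ v = μ • v ∧ B *ᵥ v = ν • v := by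
  obtain ⟨μ, ν, v, hA, hB⟩ :=
    Module.End.exists_hasEigenvector_of_commute (hAB.map Matrix.toLinAlgEquiv')
  exact ⟨μ, ν, v, hA.2, by simpa using hA.apply_eq_smul, by simpa using hB.apply_eq_smul⟩

namespace Matrix.SpecialLinearGroup

variable {F : Type*} [Field F]

theorem exists_smul_single_zero_eq {v : Fin 2 → F} (hv : v ≠ 0) :
    ∃ h : SL(2, F), h • (Pi.single 0 1 : Fin 2 → F) = v := by
  have hcop : IsCoprime (v 0) (v 1) := by
    rw [Semifield.isCoprime_iff]
    by_contra! h0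
    exact hv (funext fun i => by fin_cases i <;> simp [h0])
  obtain ⟨h, h0, h1⟩ := hcop.exists_SL2_col 0
  refine ⟨h, funext fun i => ?_⟩
  fin_cases i <;> simp [SpecialLinearGroup.smul_def, h0, h1]

theorem conj_smul_eq_of_smul_eq {n : Type*} [Fintype n] [DecidableEq n]
    {A h : SpecialLinearGroup n F} {v w : n → F} {μ : F} (hw : h • w = v)
    (hv : A • v = μ • v) :
    (h⁻¹ * A * h) • w = μ • w := by
  rw [mul_smul, mul_smul, hw, hv, smul_comm, ← hw, inv_smul_smul]

theorem apply_one_zero_eq_zero_of_smul_single_zero {M : SL(2, F)} {μ : F}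
    (hM : M • (Pi.single 0 1 : Fin 2 → F) = μ • Pi.single 0 1) : M 1 0 = 0 := by
  simpa [SpecialLinearGroup.smul_def] using congrFun hM 1

theorem apply_zero_zero_ne_zero {M : SL(2, F)} (hM : M 1 0 = 0) : M 0 0 ≠ 0 := by
  intro h0
  have hdet := M.det_coe
  rw [det_fin_two, h0, hM] at hdet
  simp at hdet

theorem apply_one_one_eq_inv {M : SL(2, F)} (hM : M 1 0 = 0) : M 1 1 = (M 0 0)⁻¹ := by
  have hdet := M.det_coe
  rw [det_fin_two, hM, mul_zero, sub_zero] at hdet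
  exact eq_inv_of_mul_eq_one_right hdet

theorem diag2_commute {a b : F} (ha : a ≠ 0) (hb : b ≠ 0) : Commute (diag2 a ha) (diag2 b hb) :=
  Subtype.ext <| by simp [diag2_coe', mul_comm]

theorem coe_diag2_mul_mul_inv {a : F} (ha : a ≠ 0) (M : SL(2, F)) :
    ((diag2 a ha * M * (diag2 a ha)⁻¹ : SL(2, F)) : Matrix (Fin 2) (Fin 2) F) =
      !![M 0 0, a * M 0 1 * a; a⁻¹ * M 1 0 * a⁻¹, M 1 1] := by
  rw [diag2_inv, coe_mul, coe_mul, diag2_coe', diag2_coe', eta_fin_two (M : Matrix _ _ F)]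
  ext i j
  fin_cases i <;> fin_cases j <;> simp [mul_right_comm _ _ a⁻¹, mul_right_comm _ _ a, ha]

theorem tendsto_diag2_mul_mul_inv [TopologicalSpace F] [IsTopologicalRing F] {α : Type*}
    {l : Filter α} {c : α → F} (hc0 : ∀ x, c x ≠ 0) (hc : Tendsto c l (𝓝 0)) {M : SL(2, F)}
    (hM : M 1 0 = 0) :
    Tendsto (fun x => ((diag2 (c x) (hc0 x) * M * (diag2 (c x) (hc0 x))⁻¹ : SL(2, F)) :
      Matrix (Fin 2) (Fin 2) F)) l (𝓝 (diag2 (M 0 0) (apply_zero_zero_ne_zero hM))) := by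
  simp_rw [coe_diag2_mul_mul_inv, hM, mul_zero, zero_mul, diag2_coe', ← apply_one_one_eq_inv hM]
  have hcont : Continuous fun t : F => !![M 0 0, t * M 0 1 * t; 0, M 1 1] := by
    fun_prop
  simpa [Function.comp_def] using (hcont.tendsto 0).comp hc

end Matrix.SpecialLinearGroup

open Matrix.SpecialLinearGroup

theorem stmt9 (A B : Matrix.SpecialLinearGroup (Fin 2) ℂ)
    (hAB : A * B = B * A) :
    ∃ (g : ℕ → Matrix.SpecialLinearGroup (Fin 2) ℂ)
      (Ainf Binf : Matrix.SpecialLinearGroup (Fin 2) ℂ),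
      Ainf * Binf = Binf * Ainf ∧
      (∃ P : Matrix (Fin 2) (Fin 2) ℂ, IsUnit P.det ∧
        (P * (Ainf : Matrix (Fin 2) (Fin 2) ℂ) * P⁻¹).IsDiag) ∧
      (∃ Q : Matrix (Fin 2) (Fin 2) ℂ, IsUnit Q.det ∧
        (Q * (Binf : Matrix (Fin 2) (Fin 2) ℂ) * Q⁻¹).IsDiag) ∧
      Filter.Tendsto
        (fun k => ((g k : Matrix (Fin 2) (Fin 2) ℂ) * A * ((g k)⁻¹ : Matrix.SpecialLinearGroup (Fin 2) ℂ)))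
        Filter.atTop (nhds (Ainf : Matrix (Fin 2) (Fin 2) ℂ)) ∧
      Filter.Tendsto
        (fun k => ((g k : Matrix (Fin 2) (Fin 2) ℂ) * B * ((g k)⁻¹ : Matrix.SpecialLinearGroup (Fin 2) ℂ)))
        Filter.atTop (nhds (Binf : Matrix (Fin 2) (Fin 2) ℂ)) := by
  obtain ⟨μ, ν, v, hv, hAv, hBv⟩ :=
    exists_mulVec_eq_smul_of_commute (Commute.map hAB coeMonoidHom)
  obtain ⟨h, hh⟩ := exists_smul_single_zero_eq hv
  have hA : (h⁻¹ * A * h) 1 0 = 0 :=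
    apply_one_zero_eq_zero_of_smul_single_zero (conj_smul_eq_of_smul_eq hh hAv)
  have hB : (h⁻¹ * B * h) 1 0 = 0 :=
    apply_one_zero_eq_zero_of_smul_single_zero (conj_smul_eq_of_smul_eq hh hBv)
  set c : ℕ → ℂ := fun k => 2⁻¹ ^ k
  have hc0 (k : ℕ) : c k ≠ 0 := pow_ne_zero _ (by norm_num)
  have hc : Tendsto c atTop (𝓝 0) := tendsto_pow_atTop_nhds_zero_of_norm_lt_one (by norm_num)
  have hconj (X : SL(2, ℂ)) (k : ℕ) :
      ((diag2 (c k) (hc0 k) * h⁻¹ : SL(2, ℂ)) : Matrix (Fin 2) (Fin 2) ℂ) * X *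
          ((diag2 (c k) (hc0 k) * h⁻¹)⁻¹ : SL(2, ℂ)) =
        ((diag2 (c k) (hc0 k) * (h⁻¹ * X * h) * (diag2 (c k) (hc0 k))⁻¹ : SL(2, ℂ)) :
          Matrix (Fin 2) (Fin 2) ℂ) := by
    simp only [← coe_mul]
    group
  refine ⟨fun k => diag2 (c k) (hc0 k) * h⁻¹, diag2 _ (apply_zero_zero_ne_zero hA),
    diag2 _ (apply_zero_zero_ne_zero hB), diag2_commute _ _,
    ⟨1, by simp, by simp [diag2_coe, isDiag_diagonal]⟩, ⟨1, by simp, by simp [diag2_coe, isDiag_diagonal]⟩, ?_, ?_⟩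
  · simpa only [hconj] using tendsto_diag2_mul_mul_inv hc0 hc hA
  · simpa only [hconj] using tendsto_diag2_mul_mul_inv hc0 hc hB
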